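/- Let G be the incidence graph of a projective plane PG(2,q) (i.e., the bipartite point–line incidence graph, which is (q+1)-regular on n = 2(q²+q+1) vertices with eigenvalues q+1, √q, −√q, −(q+1)). Then α₂(G) ≤ 2, and consequently χ₂(G) ≥ q² + q + 1. -/

import Mathlib

/-! Any two points of a projective plane lie on a common line and any two lines meet, so in the
square of the incidence graph the points form a clique, and so do the lines. A set of vertices at
pairwise distance greater than 2 therefore has at most one point and at most one line, while the
clique of the `q² + q + 1` points needs as many colours. -/

open Polynomial Finset

/-- The independence number of a simple graph: the maximum size of a set of
pairwise non-adjacent vertices. -/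
noncomputable def SimpleGraph.indepNumFinset {V : Type*} [Fintype V] (G : SimpleGraph V) : ℕ :=
  sSup {m | ∃ s : Finset V, s.card = m ∧ ∀ u ∈ s, ∀ v ∈ s, ¬ G.Adj u v}

/-- The `k`-th power of a graph: distinct vertices are adjacent iff
their distance in `G` is (finite and) at most `k`. -/
def SimpleGraph.power {V : Type*} (G : SimpleGraph V) (k : ℕ) : SimpleGraph V where
  Adj u v := u ≠ v ∧ G.Reachable u v ∧ G.dist u v ≤ k
  symm := by
    constructor
    intro u v ⟨h1, h2, h3⟩
    exact ⟨h1.symm, h2.symm, by rwa [SimpleGraph.dist_comm]⟩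
  loopless := by constructor; intro u ⟨h, _⟩; exact h rfl

/-- The `k`-independence number: the maximum size of a set of vertices at
pairwise distance greater than `k`. -/
noncomputable def SimpleGraph.kIndepNum {V : Type*} [Fintype V] (G : SimpleGraph V) (k : ℕ) : ℕ :=
  (G.power k).indepNumFinset
/-- The point–line incidence graph of an incidence structure: vertices are points and
lines, a point is adjacent to each line containing it. -/
def incidenceGraph (P L : Type*) [Membership P L] : SimpleGraph (P ⊕ L) where
  Adj x y :=
    match x, y with
    | Sum.inl p, Sum.inr l => p ∈ l
    | Sum.inr l, Sum.inl p => p ∈ l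
    | _, _ => False
  symm := by constructor; rintro (p | l) (p' | l') h <;> simp_all
  loopless := by constructor; rintro (p | l) h <;> simp_all

namespace SimpleGraph

variable {V : Type*} (G : SimpleGraph V)

lemma power_adj_of_walk {k : ℕ} {u v : V} (huv : u ≠ v) (w : G.Walk u v) (hw : w.length ≤ k) :
    (G.power k).Adj u v :=
  ⟨huv, w.reachable, (G.dist_le w).trans hw⟩

lemma power_two_adj_of_adj_of_adj {u w v : V} (huv : u ≠ v) (huw : G.Adj u w) (hwv : G.Adj w v) :
    (G.power 2).Adj u v :=
  G.power_adj_of_walk huv (.cons huw (.cons hwv .nil)) le_rfl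

lemma indepNumFinset_le_card_of_isClique_fiber [Fintype V] {ι : Type*} [Fintype ι] (f : V → ι)
    (hf : ∀ i, G.IsClique {v | f v = i}) : G.indepNumFinset ≤ Fintype.card ι := by
  refine csSup_le ⟨0, ∅, by simp⟩ ?_
  rintro m ⟨s, rfl, hs⟩
  by_contra! hcard
  obtain ⟨u, hu, v, hv, huv, hfuv⟩ :=
    Finset.exists_ne_map_eq_of_card_lt_of_maps_to hcard fun x _ ↦ Finset.mem_univ (f x)
  exact hs u hu v hv (hf (f v) hfuv rfl huv)

end SimpleGraph

section incidenceGraph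

open SimpleGraph Configuration

variable {P L : Type*} [Membership P L]

lemma incidenceGraph_adj_inl_inr {p : P} {l : L} :
    (incidenceGraph P L).Adj (.inl p) (.inr l) ↔ p ∈ l :=
  Iff.rfl

lemma incidenceGraph_adj_inr_inl {p : P} {l : L} :
    (incidenceGraph P L).Adj (.inr l) (.inl p) ↔ p ∈ l :=
  Iff.rfl

lemma incidenceGraph_power_two_adj_inl [HasLines P L] {p p' : P} (h : p ≠ p') :
    ((incidenceGraph P L).power 2).Adj (.inl p) (.inl p') :=
  have hl := HasLines.mkLine_ax (L := L) h
  power_two_adj_of_adj_of_adj _ (Sum.inl_injective.ne h)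
    (incidenceGraph_adj_inl_inr.2 hl.1) (incidenceGraph_adj_inr_inl.2 hl.2)

lemma incidenceGraph_power_two_adj_inr [HasPoints P L] {l l' : L} (h : l ≠ l') :
    ((incidenceGraph P L).power 2).Adj (.inr l) (.inr l') :=
  have hp := HasPoints.mkPoint_ax (P := P) h
  power_two_adj_of_adj_of_adj _ (Sum.inr_injective.ne h)
    (incidenceGraph_adj_inr_inl.2 hp.1) (incidenceGraph_adj_inl_inr.2 hp.2)

lemma incidenceGraph_power_two_adj_of_isLeft_eq [ProjectivePlane P L] {x y : P ⊕ L} (hxy : x ≠ y)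
    (h : x.isLeft = y.isLeft) : ((incidenceGraph P L).power 2).Adj x y := by
  rcases x with p | l <;> rcases y with p' | l'
  · exact incidenceGraph_power_two_adj_inl (by simpa using hxy)
  · simp at h
  · simp at h
  · exact incidenceGraph_power_two_adj_inr (by simpa using hxy)

lemma incidenceGraph_kIndepNum_two_le [Fintype P] [Fintype L] [ProjectivePlane P L] :
    (incidenceGraph P L).kIndepNum 2 ≤ 2 :=
  indepNumFinset_le_card_of_isClique_fiber _ Sum.isLeft fun _ _ hx _ hy hxy ↦
    incidenceGraph_power_two_adj_of_isLeft_eq hxy (hx.trans hy.symm)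

lemma card_le_incidenceGraph_power_two_chromaticNumber [Fintype P] [HasLines P L] :
    Fintype.card P ≤ ((incidenceGraph P L).power 2).chromaticNumber :=
  le_chromaticNumber_of_pairwise_adj (Nat.card_eq_fintype_card).ge Sum.inl
    fun _ _ ↦ incidenceGraph_power_two_adj_inl

end incidenceGraph

/-- For the incidence graph `G` of a projective plane of order `q`, `α₂(G) ≤ 2`, and
consequently `χ₂(G) = χ(G²) ≥ q² + q + 1`. -/
theorem incidence_graph_projective_plane_alpha2 (P L : Type*) [Membership P L]
    [Fintype P] [Fintype L] [Configuration.ProjectivePlane P L] :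
    (incidenceGraph P L).kIndepNum 2 ≤ 2 ∧
    ∀ c : ℕ, ((incidenceGraph P L).power 2).chromaticNumber = c →
      (Configuration.ProjectivePlane.order P L) ^ 2 +
        Configuration.ProjectivePlane.order P L + 1 ≤ c := by
  refine ⟨incidenceGraph_kIndepNum_two_le, fun c hc ↦ ?_⟩
  have hcard := card_le_incidenceGraph_power_two_chromaticNumber (P := P) (L := L)
  rw [hc, Nat.cast_le, Configuration.ProjectivePlane.card_points P L] at hcard
  exact hcard
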